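/- arXiv:2603.08958 — 2 statements merged into one kernel-verified Lean document; each statement's English description precedes it below -/
import Mathlib

section
/- Let R₁,…,R_n, R_{n+1} be exchangeable real-valued random variables (in particular, i.i.d.). Let q̂ be the ⌈(n+1)(1-δ)⌉-th smallest value among R₁,…,R_n, where δ ∈ (0,1) and ⌈(n+1)(1-δ)⌉ ≤ n. Then P(R_{n+1} ≤ q̂) ≥ 1 - δ. -/
/-!
Let `rank_j` be the number of scores strictly below `R_j`. For `1 ≤ k ≤ n`, the event
`R_{n+1} ≤ q̂` is exactly `rank_{n+1} < k`. Pointwise, at least `k` of the `n + 1` indices have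
rank `< k`: the smallest score of rank `≥ k` has at least `k` scores below it, all of rank `< k`.
By exchangeability the `n + 1` events `rank_j < k` are equally likely, so summing indicators gives
`(n + 1) P(rank_{n+1} < k) ≥ k ≥ (n + 1)(1 - δ)`.
-/

open MeasureTheory

/-- The `k`-th smallest element of a list of reals (1-indexed). -/
noncomputable def kthSmallest (l : List ℝ) (k : ℕ) : ℝ :=
  (l.insertionSort (· ≤ ·)).getD (k - 1) 0

open Finset

lemma List.countP_ofFn {α : Type*} {L : ℕ} (f : Fin L → α) (p : α → Bool) :
    (List.ofFn f).countP p = #{i | p (f i)} := by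
  induction L with
  | zero => simp
  | succ L ih =>
    rw [List.ofFn_succ, List.countP_cons, ih, card_filter, card_filter, Fin.sum_univ_succ]
    simp [add_comm]

lemma List.countP_eq_card_filter_getElem {α : Type*} (l : List α) (p : α → Bool) :
    l.countP p = #{i : Fin l.length | p l[(i : ℕ)]} := by
  conv_lhs => rw [← List.ofFn_getElem (xs := l)]
  exact List.countP_ofFn _ _

lemma Monotone.card_filter_lt_le_iff {α : Type*} [LinearOrder α] {L : ℕ} {f : Fin L → α}
    (hf : Monotone f) (m : Fin L) (a : α) : #{i | f i < a} ≤ m ↔ a ≤ f m := by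
  constructor
  · intro h
    by_contra! hlt
    have hsub : Iic m ⊆ ({i | f i < a} : Finset (Fin L)) := fun i hi =>
      mem_filter.mpr ⟨mem_univ i, (hf (mem_Iic.mp hi)).trans_lt hlt⟩
    have := card_le_card hsub
    rw [Fin.card_Iic] at this
    omega
  · intro h
    have hsub : ({i | f i < a} : Finset (Fin L)) ⊆ Iio m := fun i hi => by
      rw [mem_Iio]
      by_contra! hmi
      exact (h.trans (hf hmi)).not_gt (mem_filter.mp hi).2
    simpa using card_le_card hsub

lemma List.SortedLE.countP_lt_le_iff {α : Type*} [LinearOrder α] {s : List α} (hs : s.SortedLE)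
    {m : ℕ} (hm : m < s.length) (a : α) : s.countP (· < a) ≤ m ↔ a ≤ s[m] := by
  rw [s.countP_eq_card_filter_getElem]
  simpa using hs.monotone_get.card_filter_lt_le_iff ⟨m, hm⟩ a

lemma le_kthSmallest_iff {l : List ℝ} {k : ℕ} (hk0 : 0 < k) (hkl : k ≤ l.length) (a : ℝ) :
    a ≤ kthSmallest l k ↔ l.countP (· < a) < k := by
  have hperm := l.perm_insertionSort (· ≤ ·)
  have hm : k - 1 < (l.insertionSort (· ≤ ·)).length := by rw [hperm.length_eq]; omega
  rw [kthSmallest, List.getD_eq_getElem _ _ hm, ← hperm.countP_eq,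
    ← List.sortedLE_insertionSort.countP_lt_le_iff hm]
  omega

def strictRank {ι α : Type*} [Fintype ι] [LinearOrder α] (x : ι → α) (j : ι) : ℕ :=
  #{i | x i < x j}

section StrictRank

variable {ι α : Type*} [Fintype ι] [LinearOrder α]

lemma strictRank_comp_equiv (x : ι → α) (σ : ι ≃ ι) (j : ι) :
    strictRank (x ∘ σ) j = strictRank x (σ j) := by
  simp only [strictRank, card_filter, Function.comp_apply]
  exact Equiv.sum_comp σ (fun i => if x i < x (σ j) then 1 else 0)

lemma le_card_filter_strictRank_lt (x : ι → α) {k : ℕ} (hk : k ≤ Fintype.card ι) :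
    k ≤ #{j | strictRank x j < k} := by
  by_cases hB : ({j | k ≤ strictRank x j} : Finset ι).Nonempty
  · obtain ⟨j₀, hj₀, hmin⟩ := exists_min_image _ x hB
    calc k ≤ strictRank x j₀ := (mem_filter.mp hj₀).2
      _ ≤ #{j | strictRank x j < k} := by
        refine card_le_card fun i hi => ?_
        simp only [mem_filter, mem_univ, true_and] at hi ⊢
        by_contra! hik
        exact (hmin i (by simpa using hik)).not_gt hi
  · rw [not_nonempty_iff_eq_empty, filter_eq_empty_iff] at hB
    simpa [filter_true_of_mem fun j _ => not_le.mp (hB (mem_univ j))] using hk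

lemma strictRank_last {n : ℕ} (x : Fin (n + 1) → α) :
    strictRank x (Fin.last n) =
      (List.ofFn fun i : Fin n => x i.castSucc).countP (· < x (Fin.last n)) := by
  rw [List.countP_ofFn, strictRank, card_filter, card_filter, Fin.sum_univ_castSucc]
  simp

lemma measurableSet_strictRank_lt (j : ι) (k : ℕ) :
    MeasurableSet {x : ι → ℝ | strictRank x j < k} := by
  have : Measurable fun x : ι → ℝ => strictRank x j := by
    simp only [strictRank, card_filter]
    exact Finset.measurable_sum _ fun i _ => Measurable.ite
      (measurableSet_lt (measurable_pi_apply i) (measurable_pi_apply j))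
      measurable_const measurable_const
  exact this (measurableSet_Iio (a := k))

end StrictRank

open Classical in
lemma natCast_mul_measure_univ_le_sum {Ω ι : Type*} [MeasurableSpace Ω] [Fintype ι]
    (μ : Measure Ω) {A : ι → Set Ω} (hA : ∀ j, MeasurableSet (A j)) {k : ℕ}
    (h : ∀ ω, k ≤ #{j | ω ∈ A j}) :
    k * μ Set.univ ≤ ∑ j, μ (A j) := by
  have hcard : ∀ ω, ∑ j, (A j).indicator 1 ω = (#{j | ω ∈ A j} : ENNReal) := fun ω => by
    simp [Set.indicator_apply]
  calc (k : ENNReal) * μ Set.univ = ∫⁻ _, (k : ENNReal) ∂μ := by simp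
    _ ≤ ∫⁻ ω, ∑ j, (A j).indicator 1 ω ∂μ :=
      lintegral_mono fun ω => by rw [hcard]; exact Nat.cast_le.mpr (by convert h ω)
    _ = ∑ j, μ (A j) := by
      rw [lintegral_finsetSum _ fun j _ => measurable_one.indicator (hA j)]
      simp only [lintegral_indicator_one (hA _)]

def Exchangeable {Ω ι : Type*} [MeasurableSpace Ω] (P : Measure Ω) (R : ι → Ω → ℝ) : Prop :=
  ∀ σ : Equiv.Perm ι, P.map (fun ω i => R (σ i) ω) = P.map (fun ω i => R i ω)

namespace Exchangeable

variable {Ω ι : Type*} [MeasurableSpace Ω] [Fintype ι] {P : Measure Ω} {R : ι → Ω → ℝ}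

lemma measure_strictRank_lt_eq (h : Exchangeable P R) (hmeas : ∀ i, Measurable (R i))
    (j j' : ι) (k : ℕ) :
    P {ω | strictRank (fun i => R i ω) j < k} = P {ω | strictRank (fun i => R i ω) j' < k} := by
  classical
  let σ := Equiv.swap j' j
  have hT : Measurable fun ω i => R i ω := measurable_pi_lambda _ hmeas
  have hTσ : Measurable fun ω i => R (σ i) ω := measurable_pi_lambda _ fun i => hmeas (σ i)
  have hpre : {ω | strictRank (fun i => R i ω) j < k} =
      (fun ω i => R (σ i) ω) ⁻¹' {x | strictRank x j' < k} := by
    ext ω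
    change strictRank (fun i => R i ω) j < k ↔ strictRank ((fun i => R i ω) ∘ σ) j' < k
    rw [strictRank_comp_equiv, Equiv.swap_apply_left]
  rw [hpre, ← Measure.map_apply hTσ (measurableSet_strictRank_lt j' k), h σ,
    Measure.map_apply hT (measurableSet_strictRank_lt j' k)]
  rfl

lemma natCast_mul_measure_univ_le (h : Exchangeable P R) (hmeas : ∀ i, Measurable (R i))
    (j : ι) {k : ℕ} (hk : k ≤ Fintype.card ι) :
    k * P Set.univ ≤ Fintype.card ι * P {ω | strictRank (fun i => R i ω) j < k} := by
  have hA : ∀ j, MeasurableSet {ω | strictRank (fun i => R i ω) j < k} := fun j =>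
    measurable_pi_lambda _ hmeas (measurableSet_strictRank_lt j k)
  calc k * P Set.univ ≤ ∑ j', P {ω | strictRank (fun i => R i ω) j' < k} :=
        natCast_mul_measure_univ_le_sum P hA fun ω => by
          simpa using le_card_filter_strictRank_lt (fun i => R i ω) hk
    _ = Fintype.card ι * P {ω | strictRank (fun i => R i ω) j < k} := by
        rw [sum_congr rfl fun j' _ => h.measure_strictRank_lt_eq hmeas j' j k, sum_const,
          card_univ, nsmul_eq_mul]

end Exchangeable

/-- Split conformal prediction coverage: if `R 0, …, R n` are exchangeable real
random variables and `q̂` is the `⌈(n+1)(1-δ)⌉`-th smallest of the first `n`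
(calibration) scores, with `⌈(n+1)(1-δ)⌉ ≤ n`, then `P(R_{n+1} ≤ q̂) ≥ 1 - δ`. -/
theorem stmt_6 {Ω : Type*} [MeasurableSpace Ω] (P : Measure Ω)
    [IsProbabilityMeasure P] (n : ℕ) (R : Fin (n + 1) → Ω → ℝ)
    (hmeas : ∀ i, Measurable (R i))
    (hexch : ∀ σ : Equiv.Perm (Fin (n + 1)),
      Measure.map (fun ω (i : Fin (n + 1)) => R (σ i) ω) P =
        Measure.map (fun ω (i : Fin (n + 1)) => R i ω) P)
    (δ : ℝ) (hδ : δ ∈ Set.Ioo (0 : ℝ) 1)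
    (k : ℕ) (hk : k = ⌈((n : ℝ) + 1) * (1 - δ)⌉₊) (hkn : k ≤ n)
    (qhat : Ω → ℝ)
    (hq : ∀ ω, qhat ω = kthSmallest (List.ofFn fun i : Fin n => R i.castSucc ω) k) :
    (P {ω | R (Fin.last n) ω ≤ qhat ω}).toReal ≥ 1 - δ := by
  have hk0 : 0 < k := hk ▸ Nat.ceil_pos.mpr (mul_pos (by positivity) (sub_pos.mpr hδ.2))
  have hevent : {ω | R (Fin.last n) ω ≤ qhat ω} =
      {ω | strictRank (fun i => R i ω) (Fin.last n) < k} := by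
    ext ω
    rw [Set.mem_ofPred_eq, Set.mem_ofPred_eq, hq, strictRank_last,
      le_kthSmallest_iff hk0 (by simpa using hkn)]
  have hbound := Exchangeable.natCast_mul_measure_univ_le hexch hmeas (Fin.last n)
    (k := k) (by rw [Fintype.card_fin]; omega)
  simp only [measure_univ, mul_one, Fintype.card_fin] at hbound
  have hreal := ENNReal.toReal_mono (by finiteness) hbound
  rw [ENNReal.toReal_mul, ENNReal.toReal_natCast, ENNReal.toReal_natCast] at hreal
  push_cast at hreal
  have hceil : ((n : ℝ) + 1) * (1 - δ) ≤ k := hk ▸ Nat.le_ceil _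
  rw [hevent, ge_iff_le]
  exact le_of_mul_le_mul_left (hceil.trans hreal) (by positivity)
end

section
/- Let α : ℝ → ℝ be continuous, strictly increasing with α(0) = 0 (extended class-K). Suppose y : [0,T] → ℝ is differentiable with y(0) ≥ 0 and y'(t) ≥ -α(y(t)) for all t ∈ [0,T]. Then y(t) ≥ 0 for all t ∈ [0,T]. -/
/-- Forward invariance of the nonnegative half-line under `y' ≥ -α(y)` for an
extended class-K function `α` (continuous, strictly increasing, `α 0 = 0`):
if `y(0) ≥ 0` then `y(t) ≥ 0` on `[0, T]`. -/
theorem stmt_13 (α : ℝ → ℝ) (hcont : Continuous α) (hmono : StrictMono α)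
    (hα0 : α 0 = 0) (T : ℝ) (hT : 0 ≤ T) (y : ℝ → ℝ)
    (hdiff : Differentiable ℝ y)
    (hineq : ∀ t ∈ Set.Icc (0 : ℝ) T, deriv y t ≥ -α (y t))
    (h0 : y 0 ≥ 0) :
    ∀ t ∈ Set.Icc (0 : ℝ) T, y t ≥ 0 := by
  by_contra hcon
  push_neg at hcon
  obtain ⟨t0, ht0, hy0⟩ := hcon
  set S : Set ℝ := Set.Icc 0 t0 ∩ y ⁻¹' Set.Ici 0 with hS
  have hSclosed : IsClosed S := isClosed_Icc.inter (isClosed_Ici.preimage hdiff.continuous)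
  have h0S : (0 : ℝ) ∈ S := ⟨⟨le_refl _, ht0.1⟩, h0⟩
  have hSne : S.Nonempty := ⟨0, h0S⟩
  have hSbdd : BddAbove S := ⟨t0, fun x hx => hx.1.2⟩
  set s := sSup S with hs
  have hsS : s ∈ S := hSclosed.csSup_mem hSne hSbdd
  have hys : 0 ≤ y s := hsS.2
  have hst0 : s ≤ t0 := hsS.1.2
  have hs0 : 0 ≤ s := hsS.1.1
  have hne : s ≠ t0 := fun h => by
    rw [h] at hys; linarith
  have hlt : s < t0 := lt_of_le_of_ne hst0 hne
  -- on (s, t0], y < 0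
  have hyneg : ∀ t ∈ Set.Ioc s t0, y t < 0 := by
    intro t ht
    by_contra h
    push_neg at h
    have : t ∈ S := ⟨⟨le_trans hs0 ht.1.le, ht.2⟩, h⟩
    have := le_csSup hSbdd this
    exact absurd this (not_le.2 ht.1)
  -- deriv positive on (s, t0)
  have hderiv : ∀ t ∈ Set.Ioo s t0, 0 < deriv y t := by
    intro t ht
    have htT : t ∈ Set.Icc (0 : ℝ) T :=
      ⟨le_trans hs0 ht.1.le, le_trans ht.2.le ht0.2⟩
    have hy : y t < 0 := hyneg t ⟨ht.1, ht.2.le⟩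
    have : α (y t) < 0 := by
      have := hmono hy
      rwa [hα0] at this
    have := hineq t htT
    linarith
  have hmono' : StrictMonoOn y (Set.Icc s t0) :=
    strictMonoOn_of_deriv_pos (convex_Icc s t0) (hdiff.continuous.continuousOn)
      (by rwa [interior_Icc])
  have : y s < y t0 := hmono' ⟨le_refl _, hst0⟩ ⟨hst0, le_refl _⟩ hlt
  linarith
end
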